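/- For all integers k and i with 0 ≤ k, 2(2k+1)·d(m,k) + (k+1)·d(m,k+1) = Σ_i iterm(m,k,i), where iterm(m,k,i) = 2(2k+1)·term(m,k,i,k) and term(m,k,i,j) = [m≥0]·3·(-1)^{k+j}·C(2k,k)·C(j,i)·C(m,i)·C(i,m-j)/(2(2i-1)(2j+1)(2m-2i-1)). -/

import Mathlib

/-- Binomial coefficient polynomial `x(x-1)...(x-j+1)/j!` at integer `x`; zero for `j < 0`. -/
def binC (x j : ℤ) : ℚ :=
  if j < 0 then 0 else (∏ t ∈ Finset.range j.toNat, ((x : ℚ) - t)) / (j.toNat).factorial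

/-- The coefficients `d(m,k)`; zero for `m < 0`. -/
noncomputable def dd (m k : ℤ) : ℚ :=
  if m < 0 then 0 else
  ∑ i ∈ Finset.Icc 0 m, ∑ j ∈ Finset.Icc k m,
    3 * (-1 : ℚ) ^ (k + j) * binC (2 * k) k * binC j i * binC m i * binC i (m - j) /
      (2 * (2 * i - 1) * (2 * j + 1) * (2 * m - 2 * i - 1))

def term (m k i j : ℤ) : ℚ :=
  (if 0 ≤ m then 1 else 0) *
    (3 * (-1 : ℚ) ^ (k + j) * binC (2 * k) k * binC j i * binC m i * binC i (m - j) /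
      (2 * (2 * i - 1) * (2 * j + 1) * (2 * m - 2 * i - 1)))

def iterm (m k i : ℤ) : ℚ := 2 * (2 * k + 1) * term m k i k

lemma binC_of_neg (x : ℤ) {j : ℤ} (hj : j < 0) : binC x j = 0 := if_pos hj

lemma binC_natCast (n j : ℕ) : binC n j = n.choose j := by
  rw [binC, if_neg (by omega), Int.toNat_natCast, Nat.cast_choose_eq_descPochhammer_div,
    descPochhammer_eval_eq_prod_range]
  push_cast
  rfl

lemma binC_two_mul_self (n : ℕ) : binC (2 * n) n = n.centralBinom := by
  rw [Nat.centralBinom_eq_two_mul_choose, ← binC_natCast]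
  push_cast
  rfl

/-- For `k < 0` both sides vanish: `binC x j = 0` for `j < 0`, and at `k = -1` the factor `k + 1`
is zero. -/
lemma succ_mul_binC_two_mul_succ (k : ℤ) :
    (k + 1) * binC (2 * (k + 1)) (k + 1) = 2 * (2 * k + 1) * binC (2 * k) k := by
  rcases lt_or_ge k 0 with hk | hk
  · rw [binC_of_neg _ hk]
    rcases eq_or_lt_of_le (Int.add_one_le_iff.mpr hk) with hk' | hk'
    · rw [show (k : ℚ) + 1 = 0 by exact_mod_cast hk', zero_mul, mul_zero]
    · rw [binC_of_neg _ hk', mul_zero, mul_zero]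
  · obtain ⟨n, rfl⟩ := Int.eq_ofNat_of_zero_le hk
    have h := Nat.succ_mul_centralBinom_succ n
    rw [show (n : ℤ) + 1 = (n + 1 : ℕ) by push_cast; ring, binC_two_mul_self, binC_two_mul_self]
    exact_mod_cast h

lemma succ_mul_term_succ (m k i j : ℤ) :
    (k + 1) * term m (k + 1) i j = -(2 * (2 * k + 1) * term m k i j) := by
  have hsign : (-1 : ℚ) ^ (k + 1 + j) = -(-1) ^ (k + j) := by
    rw [add_right_comm, zpow_add_one₀ (by norm_num)]
    ring
  unfold term
  rw [hsign]
  linear_combination (-3 * (if 0 ≤ m then 1 else 0) * (-1 : ℚ) ^ (k + j) * binC j i * binC m i *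
    binC i (m - j) / (2 * (2 * i - 1) * (2 * j + 1) * (2 * m - 2 * i - 1))) *
    succ_mul_binC_two_mul_succ k

lemma term_of_lt {m j : ℤ} (k i : ℤ) (h : m < j) : term m k i j = 0 := by
  rw [term, binC_of_neg _ (by omega : m - j < 0)]
  simp

lemma dd_eq_sum_term (m k : ℤ) :
    dd m k = ∑ i ∈ Finset.Icc 0 m, ∑ j ∈ Finset.Icc k m, term m k i j := by
  unfold dd term
  rcases lt_or_ge m 0 with hm | hm
  · rw [if_pos hm, Finset.Icc_eq_empty (by omega), Finset.sum_empty]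
  · simp only [if_neg hm.not_gt, if_pos hm, one_mul]

/-- By `succ_mul_term_succ` the terms with `j ≥ k + 1` cancel in pairs, leaving only `j = k`. -/
lemma two_mul_sum_term_add_succ_mul_sum_term_succ (m k i : ℤ) :
    2 * (2 * k + 1) * ∑ j ∈ Finset.Icc k m, term m k i j +
      (k + 1) * ∑ j ∈ Finset.Icc (k + 1) m, term m (k + 1) i j = iterm m k i := by
  have hcancel : (k + 1) * ∑ j ∈ Finset.Icc (k + 1) m, term m (k + 1) i j =
      -(2 * (2 * k + 1) * ∑ j ∈ Finset.Icc (k + 1) m, term m k i j) := by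
    simp only [Finset.mul_sum, succ_mul_term_succ, Finset.sum_neg_distrib]
  rw [hcancel, iterm]
  rcases le_or_gt k m with hkm | hkm
  · rw [← Finset.insert_Icc_add_one_left_eq_Icc hkm, Finset.sum_insert (by simp)]
    ring
  · simp [Finset.Icc_eq_empty_of_lt hkm, Finset.Icc_eq_empty_of_lt (hkm.trans (lt_add_one k)),
      term_of_lt k i hkm]

theorem d_single_sum_general (m k : ℤ) :
    2 * (2 * k + 1) * dd m k + (k + 1) * dd m (k + 1) =
      ∑ i ∈ Finset.Icc 0 m, iterm m k i := by
  rw [dd_eq_sum_term, dd_eq_sum_term, Finset.mul_sum, Finset.mul_sum, ← Finset.sum_add_distrib]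
  exact Finset.sum_congr rfl fun i _ => two_mul_sum_term_add_succ_mul_sum_term_succ m k i

theorem d_single_sum (m k : ℤ) (hk : 0 ≤ k) :
    2 * (2 * k + 1) * dd m k + (k + 1) * dd m (k + 1) =
      ∑ i ∈ Finset.Icc 0 m, iterm m k i :=
  d_single_sum_general m k
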